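/- arXiv:1509.08070 — 2 statements merged into one kernel-verified Lean document; each statement's English description precedes it below -/
import Mathlib

section
/- Let h > 0, let u_0 < u_1 < … < u_5 be equidistant reals with u_{k+1} − u_k = h, all lying in [a,b], and let f ∈ Δ³[a,b]. Set D_k := [u_k, u_{k+1}, u_{k+2}, u_{k+3}; f] for k = 0, 1, 2, assume D_0 ≤ D_1 and D_2 < D_1, and define d := ( (u_1+u_2)·D_0 + (u_2+u_3)·D_1 + (u_3+u_4)·D_2 ) / ( 2(D_0 + D_1 + D_2) ) and P(x) := 3h·( D_0·(x−u_1)(x−u_2) + D_1·(x−u_2)(x−u_3) + D_2·(x−u_3)(x−u_4) ). Then H := P(d), the minimum value of the upward parabola P, satisfies H ≥ 0. -/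
/-! For `x` off the nodes, `(x-t₀)(x-t₁)(x-t₂)·[t₀,t₁,t₂,x; f] = f x - Q_{t₀t₁t₂}(x)` with `Q` the
quadratic interpolant of `f`. Subtracting this identity at `u₃,u₄,u₅` from the one at `u₀,u₁,u₂`
cancels `f x`, and for equidistant nodes `Q_{u₃u₄u₅} - Q_{u₀u₁u₂}` is exactly the parabola `P`. On
`[u₂,u₃]` the two node polynomials have opposite signs while both divided differences are
nonnegative by 3-monotonicity, so `P ≥ 0` there; and `D₀ ≤ D₁`, `D₂ ≤ D₁` put the vertex `d` in
`[u₂,u₃]`. -/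

/-- Third-order divided difference `[t0, t1, t2, t3; f]` at four (distinct) points. -/
noncomputable def dd4 (f : ℝ → ℝ) (t0 t1 t2 t3 : ℝ) : ℝ :=
  f t0 / ((t0 - t1) * (t0 - t2) * (t0 - t3)) +
  f t1 / ((t1 - t0) * (t1 - t2) * (t1 - t3)) +
  f t2 / ((t2 - t0) * (t2 - t1) * (t2 - t3)) +
  f t3 / ((t3 - t0) * (t3 - t1) * (t3 - t2))

/-- `f ∈ Δ³[a,b]`: `f` is continuous on `[a,b]` and all its third divided differences
over four distinct points of `[a,b]` are nonnegative (3-monotone). -/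
def Delta3 (a b : ℝ) (f : ℝ → ℝ) : Prop :=
  ContinuousOn f (Set.Icc a b) ∧
  ∀ t0 t1 t2 t3 : ℝ, t0 ∈ Set.Icc a b → t1 ∈ Set.Icc a b →
    t2 ∈ Set.Icc a b → t3 ∈ Set.Icc a b →
    t0 ≠ t1 → t0 ≠ t2 → t0 ≠ t3 → t1 ≠ t2 → t1 ≠ t3 → t2 ≠ t3 →
    0 ≤ dd4 f t0 t1 t2 t3

noncomputable def quadInterp (f : ℝ → ℝ) (t0 t1 t2 x : ℝ) : ℝ :=
  f t0 * ((x - t1) * (x - t2)) / ((t0 - t1) * (t0 - t2)) +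
  f t1 * ((x - t0) * (x - t2)) / ((t1 - t0) * (t1 - t2)) +
  f t2 * ((x - t0) * (x - t1)) / ((t2 - t0) * (t2 - t1))

theorem nodePoly_mul_dd4 (f : ℝ → ℝ) {t0 t1 t2 x : ℝ} (h01 : t0 ≠ t1) (h02 : t0 ≠ t2)
    (h12 : t1 ≠ t2) (h0 : x ≠ t0) (h1 : x ≠ t1) (h2 : x ≠ t2) :
    (x - t0) * (x - t1) * (x - t2) * dd4 f t0 t1 t2 x = f x - quadInterp f t0 t1 t2 x := by
  unfold dd4 quadInterp
  field_simp
  ring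

theorem dd4_rotate (f : ℝ → ℝ) (t0 t1 t2 t3 : ℝ) :
    dd4 f t1 t2 t3 t0 = dd4 f t0 t1 t2 t3 := by
  unfold dd4
  ring

theorem Delta3.dd4_nonneg_of_lt {a b : ℝ} {f : ℝ → ℝ} (hf : Delta3 a b f) {t0 t1 t2 t3 : ℝ}
    (ha : a ≤ t0) (h01 : t0 < t1) (h12 : t1 < t2) (h23 : t2 < t3) (hb : t3 ≤ b) :
    0 ≤ dd4 f t0 t1 t2 t3 :=
  hf.2 t0 t1 t2 t3 ⟨ha, by linarith⟩ ⟨by linarith, by linarith⟩ ⟨by linarith, by linarith⟩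
    ⟨by linarith, hb⟩ h01.ne (h01.trans h12).ne (h01.trans (h12.trans h23)).ne h12.ne
    (h12.trans h23).ne h23.ne

theorem quadInterp_sub_quadInterp_of_equidistant (f : ℝ → ℝ) {h : ℝ} (hh : h ≠ 0)
    {u0 u1 u2 u3 u4 u5 : ℝ} (h1 : u1 = u0 + h) (h2 : u2 = u1 + h) (h3 : u3 = u2 + h)
    (h4 : u4 = u3 + h) (h5 : u5 = u4 + h) (x : ℝ) :
    quadInterp f u3 u4 u5 x - quadInterp f u0 u1 u2 x =
      3 * h * (dd4 f u0 u1 u2 u3 * (x - u1) * (x - u2) +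
        dd4 f u1 u2 u3 u4 * (x - u2) * (x - u3) + dd4 f u2 u3 u4 u5 * (x - u3) * (x - u4)) := by
  subst h1 h2 h3 h4 h5
  unfold quadInterp dd4
  ring_nf
  field_simp
  ring

theorem equidistant_parabola_eq_of_mem_Ioo (f : ℝ → ℝ) {h : ℝ} (hh : 0 < h)
    {u0 u1 u2 u3 u4 u5 : ℝ} (h1 : u1 = u0 + h) (h2 : u2 = u1 + h) (h3 : u3 = u2 + h)
    (h4 : u4 = u3 + h) (h5 : u5 = u4 + h) {x : ℝ} (hx : x ∈ Set.Ioo u2 u3) :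
    3 * h * (dd4 f u0 u1 u2 u3 * (x - u1) * (x - u2) +
      dd4 f u1 u2 u3 u4 * (x - u2) * (x - u3) + dd4 f u2 u3 u4 u5 * (x - u3) * (x - u4)) =
      (x - u0) * (x - u1) * (x - u2) * dd4 f u0 u1 u2 x -
        (x - u3) * (x - u4) * (x - u5) * dd4 f u3 u4 u5 x := by
  obtain ⟨hx2, hx3⟩ := hx
  rw [← quadInterp_sub_quadInterp_of_equidistant f hh.ne' h1 h2 h3 h4 h5,
    nodePoly_mul_dd4 f (by linarith) (by linarith) (by linarith) (by linarith) (by linarith)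
      (by linarith),
    nodePoly_mul_dd4 f (by linarith) (by linarith) (by linarith) (by linarith) (by linarith)
      (by linarith)]
  ring

theorem Delta3.equidistant_parabola_nonneg {a b h : ℝ} {f : ℝ → ℝ} (hf : Delta3 a b f)
    (hh : 0 < h) {u0 u1 u2 u3 u4 u5 : ℝ} (h1 : u1 = u0 + h) (h2 : u2 = u1 + h)
    (h3 : u3 = u2 + h) (h4 : u4 = u3 + h) (h5 : u5 = u4 + h) (ha : a ≤ u0) (hb : u5 ≤ b)
    {x : ℝ} (hx : x ∈ Set.Icc u2 u3) :
    0 ≤ 3 * h * (dd4 f u0 u1 u2 u3 * (x - u1) * (x - u2) +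
      dd4 f u1 u2 u3 u4 * (x - u2) * (x - u3) + dd4 f u2 u3 u4 u5 * (x - u3) * (x - u4)) := by
  rcases hx.1.eq_or_lt with hx2 | hx2
  · subst x
    have hD2 : 0 ≤ dd4 f u2 u3 u4 u5 :=
      hf.dd4_nonneg_of_lt (by linarith) (by linarith) (by linarith) (by linarith) hb
    calc 0 ≤ 6 * h ^ 3 * dd4 f u2 u3 u4 u5 := by positivity
      _ = _ := by subst h3 h4; ring
  rcases hx.2.eq_or_lt with hx3 | hx3
  · subst x
    have hD0 : 0 ≤ dd4 f u0 u1 u2 u3 :=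
      hf.dd4_nonneg_of_lt ha (by linarith) (by linarith) (by linarith) (by linarith)
    calc 0 ≤ 6 * h ^ 3 * dd4 f u0 u1 u2 u3 := by positivity
      _ = _ := by subst h2 h3; ring
  have hA : 0 ≤ dd4 f u0 u1 u2 x :=
    hf.dd4_nonneg_of_lt ha (by linarith) (by linarith) hx2 (by linarith)
  have hB : 0 ≤ dd4 f u3 u4 u5 x := dd4_rotate f x u3 u4 u5 ▸
    hf.dd4_nonneg_of_lt (by linarith) hx3 (by linarith) (by linarith) hb
  have hleft : 0 ≤ (x - u0) * (x - u1) * (x - u2) :=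
    mul_nonneg (mul_nonneg (by linarith) (by linarith)) (by linarith)
  have hright : (x - u3) * (x - u4) * (x - u5) ≤ 0 :=
    mul_nonpos_of_nonneg_of_nonpos (mul_nonneg_of_nonpos_of_nonpos (by linarith) (by linarith))
      (by linarith)
  rw [equidistant_parabola_eq_of_mem_Ioo f hh h1 h2 h3 h4 h5 ⟨hx2, hx3⟩]
  exact sub_nonneg.2 ((mul_nonpos_of_nonpos_of_nonneg hright hB).trans (mul_nonneg hleft hA))

theorem equidistant_vertex_mem_Icc {h D0 D1 D2 u1 u2 u3 u4 : ℝ} (hh : 0 < h)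
    (h2 : u2 = u1 + h) (h3 : u3 = u2 + h) (h4 : u4 = u3 + h)
    (hD0 : 0 ≤ D0) (hD2 : 0 ≤ D2) (h01 : D0 ≤ D1) (h21 : D2 ≤ D1) (hS : 0 < D0 + D1 + D2) :
    ((u1 + u2) * D0 + (u2 + u3) * D1 + (u3 + u4) * D2) / (2 * (D0 + D1 + D2)) ∈
      Set.Icc u2 u3 := by
  subst h2 h3 h4
  constructor
  · rw [le_div_iff₀ (by positivity)]
    nlinarith [mul_nonneg hh.le (sub_nonneg.2 h01), mul_nonneg hh.le hD2]
  · rw [div_le_iff₀ (by positivity)]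
    nlinarith [mul_nonneg hh.le (sub_nonneg.2 h21), mul_nonneg hh.le hD0]

theorem statement13_general (a b h : ℝ) (hh : 0 < h) (u0 u1 u2 u3 u4 u5 : ℝ)
    (h1 : u1 = u0 + h) (h2 : u2 = u1 + h) (h3 : u3 = u2 + h)
    (h4 : u4 = u3 + h) (h5 : u5 = u4 + h)
    (hm0 : u0 ∈ Set.Icc a b) (hm5 : u5 ∈ Set.Icc a b)
    (f : ℝ → ℝ) (hf : Delta3 a b f)
    (D0 D1 D2 : ℝ)
    (hD0 : D0 = dd4 f u0 u1 u2 u3) (hD1 : D1 = dd4 f u1 u2 u3 u4)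
    (hD2 : D2 = dd4 f u2 u3 u4 u5)
    (h01 : D0 ≤ D1) (h21 : D2 < D1)
    (d : ℝ)
    (hd : d = ((u1 + u2) * D0 + (u2 + u3) * D1 + (u3 + u4) * D2) /
        (2 * (D0 + D1 + D2)))
    (P : ℝ → ℝ)
    (hP : ∀ x, P x = 3 * h * (D0 * (x - u1) * (x - u2) + D1 * (x - u2) * (x - u3) +
        D2 * (x - u3) * (x - u4)))
    (H : ℝ) (hH : H = P d) :
    0 ≤ H := by
  have hD0_nonneg : 0 ≤ D0 := hD0 ▸
    hf.dd4_nonneg_of_lt hm0.1 (by linarith) (by linarith) (by linarith) (by linarith [hm5.2])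
  have hD2_nonneg : 0 ≤ D2 := hD2 ▸
    hf.dd4_nonneg_of_lt (by linarith [hm0.1]) (by linarith) (by linarith) (by linarith) hm5.2
  have hd_mem : d ∈ Set.Icc u2 u3 := hd ▸
    equidistant_vertex_mem_Icc hh h2 h3 h4 hD0_nonneg hD2_nonneg h01 h21.le (by linarith)
  rw [hH, hP, hD0, hD1, hD2]
  exact hf.equidistant_parabola_nonneg hh h1 h2 h3 h4 h5 hm0.1 hm5.2 hd_mem

/-- Inequality (18): the minimum value `H = P(d)` of the upward parabola
`P(x) = 3h(D₀(x−u₁)(x−u₂) + D₁(x−u₂)(x−u₃) + D₂(x−u₃)(x−u₄))` is nonnegative. -/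
theorem statement13 (a b h : ℝ) (hh : 0 < h) (u0 u1 u2 u3 u4 u5 : ℝ)
    (h1 : u1 = u0 + h) (h2 : u2 = u1 + h) (h3 : u3 = u2 + h)
    (h4 : u4 = u3 + h) (h5 : u5 = u4 + h)
    (hm0 : u0 ∈ Set.Icc a b) (hm1 : u1 ∈ Set.Icc a b) (hm2 : u2 ∈ Set.Icc a b)
    (hm3 : u3 ∈ Set.Icc a b) (hm4 : u4 ∈ Set.Icc a b) (hm5 : u5 ∈ Set.Icc a b)
    (f : ℝ → ℝ) (hf : Delta3 a b f)
    (D0 D1 D2 : ℝ)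
    (hD0 : D0 = dd4 f u0 u1 u2 u3) (hD1 : D1 = dd4 f u1 u2 u3 u4)
    (hD2 : D2 = dd4 f u2 u3 u4 u5)
    (h01 : D0 ≤ D1) (h21 : D2 < D1)
    (d : ℝ)
    (hd : d = ((u1 + u2) * D0 + (u2 + u3) * D1 + (u3 + u4) * D2) /
        (2 * (D0 + D1 + D2)))
    (P : ℝ → ℝ)
    (hP : ∀ x, P x = 3 * h * (D0 * (x - u1) * (x - u2) + D1 * (x - u2) * (x - u3) +
        D2 * (x - u3) * (x - u4)))
    (H : ℝ) (hH : H = P d) :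
    0 ≤ H :=
  statement13_general a b h hh u0 u1 u2 u3 u4 u5 h1 h2 h3 h4 h5 hm0 hm5 f hf D0 D1 D2 hD0 hD1 hD2
    h01 h21 d hd P hP H hH
end

section
/- Let a < b and let f ∈ Δ³[a,b], i.e. f : [a,b] → ℝ is continuous and all its third divided differences over four distinct points of [a,b] are nonnegative. Then f is differentiable at every point of (a,b) and its derivative f' is a convex function on (a,b). -/
/-!
Fix `c`. The second divided difference of the slope function `t ↦ [c, t; f]` at `x, y, z` is
`[c, x, y, z; f] ≥ 0`, so this function has nondecreasing slopes on `[a, b] \ {c}`. Squeezing its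
slopes near `c` between two fixed ones makes it Lipschitz on a punctured neighbourhood of `c`,
hence convergent at `c`: `f` is differentiable at `c`.

Since `[x, y, z; f] - [v, y, z; f] = (x - v) [x, v, y, z; f]`, the second divided difference is
nondecreasing in each argument, so the difference quotients `t ↦ (f (t + h) - f t) / h`, `h > 0`,
have nonnegative second divided differences. Letting `h → 0⁺` gives the same for `f'`, which is
convexity.
-/

open Set Filter Topology

/-- The second-order divided difference `[x, y, z; f]`. -/
noncomputable def dd3 (f : ℝ → ℝ) (x y z : ℝ) : ℝ :=
  f x / ((x - y) * (x - z)) + f y / ((y - x) * (y - z)) + f z / ((z - x) * (z - y))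

lemma dd3_comm (f : ℝ → ℝ) (x y z : ℝ) : dd3 f x y z = dd3 f y x z := by
  unfold dd3; ring

lemma dd3_rotate (f : ℝ → ℝ) (x y z : ℝ) : dd3 f x y z = dd3 f z x y := by
  unfold dd3; ring

lemma slope_sub_slope_eq_mul_dd3 (g : ℝ → ℝ) {x y z : ℝ} (hxy : x ≠ y) (hyz : y ≠ z)
    (hxz : x ≠ z) : slope g y z - slope g x y = (z - x) * dd3 g x y z := by
  simp only [slope_def_field, dd3]
  field_simp [sub_ne_zero]
  ring

lemma dd3_sub_dd3_eq_mul_dd4 (f : ℝ → ℝ) {u v y z : ℝ} (huv : u ≠ v) (huy : u ≠ y)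
    (huz : u ≠ z) (hvy : v ≠ y) (hvz : v ≠ z) (hyz : y ≠ z) :
    dd3 f u y z - dd3 f v y z = (u - v) * dd4 f u v y z := by
  simp only [dd3, dd4]
  field_simp [sub_ne_zero]
  ring

lemma dd3_slope (f : ℝ → ℝ) {c x y z : ℝ} (hcx : c ≠ x) (hcy : c ≠ y) (hcz : c ≠ z)
    (hxy : x ≠ y) (hxz : x ≠ z) (hyz : y ≠ z) :
    dd3 (slope f c) x y z = dd4 f c x y z := by
  simp only [dd3, dd4, slope_def_field]
  field_simp [sub_ne_zero]
  ring

lemma dd3_difference_quotient (f : ℝ → ℝ) (h x y z : ℝ) :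
    dd3 (fun t => h⁻¹ * (f (t + h) - f t)) x y z
      = h⁻¹ * (dd3 f (x + h) (y + h) (z + h) - dd3 f x y z) := by
  simp only [dd3]
  ring

lemma slope_le_slope_of_dd3_nonneg {g : ℝ → ℝ} {x y z : ℝ} (hxy : x < y) (hyz : y < z)
    (h : 0 ≤ dd3 g x y z) : slope g x y ≤ slope g y z := by
  rw [← sub_nonneg, slope_sub_slope_eq_mul_dd3 g hxy.ne hyz.ne (hxy.trans hyz).ne]
  exact mul_nonneg (sub_pos.2 (hxy.trans hyz)).le h

lemma convexOn_of_dd3_nonneg {g : ℝ → ℝ} {s : Set ℝ} (hs : Convex ℝ s)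
    (hg : ∀ x ∈ s, ∀ z ∈ s, ∀ y, x < y → y < z → 0 ≤ dd3 g x y z) : ConvexOn ℝ s g :=
  convexOn_of_slope_mono_adjacent hs fun hx hz hxy hyz => by
    simpa only [slope_def_field] using slope_le_slope_of_dd3_nonneg hxy hyz (hg _ hx _ hz _ hxy hyz)

lemma LipschitzOnWith.of_abs_slope_le {g : ℝ → ℝ} {t : Set ℝ} {C : ℝ}
    (h : ∀ x ∈ t, ∀ y ∈ t, x < y → |slope g x y| ≤ C) : LipschitzOnWith C.toNNReal g t := by
  refine LipschitzOnWith.of_dist_le_mul fun x hx y hy => ?_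
  wlog hxy : x < y generalizing x y
  · rcases (not_lt.1 hxy).lt_or_eq with hyx | rfl
    · simpa only [dist_comm] using this y hy x hx hyx
    · simp
  have hyx : 0 < y - x := sub_pos.2 hxy
  have key : g y - g x = (y - x) * slope g x y := by
    rw [slope_def_field, mul_div_cancel₀ _ hyx.ne']
  rw [dist_comm (g x), dist_comm x, Real.dist_eq, Real.dist_eq, key, abs_mul, abs_of_pos hyx,
    mul_comm, Real.coe_toNNReal']
  gcongr
  exact (h x hx y hy hxy).trans (le_max_left _ _)

lemma lipschitzOnWith_of_slope_mono {g : ℝ → ℝ} {s : Set ℝ}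
    (hg : ∀ x ∈ s, ∀ y ∈ s, ∀ z ∈ s, x < y → y < z → slope g x y ≤ slope g y z)
    {a p q b : ℝ} (ha : a ∈ s) (hp : p ∈ s) (hq : q ∈ s) (hb : b ∈ s) (hap : a < p)
    (hqb : q < b) :
    LipschitzOnWith (max |slope g a p| |slope g q b|).toNNReal g (s ∩ Ioo p q) := by
  refine LipschitzOnWith.of_abs_slope_le fun x ⟨hx, hpx, hxq⟩ y ⟨hy, hpy, hyq⟩ hxy => ?_
  have lower := (hg a ha p hp x hx hap hpx).trans (hg p hp x hx y hy hpx hxy)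
  have upper := (hg x hx y hy q hq hxy hyq).trans (hg y hy q hq b hb hyq hqb)
  rw [abs_le]
  constructor
  · linarith [neg_abs_le (slope g a p), le_max_left |slope g a p| |slope g q b|]
  · linarith [le_abs_self (slope g q b), le_max_right |slope g a p| |slope g q b|]

lemma LipschitzOnWith.exists_tendsto {α : Type*} [PseudoMetricSpace α] {g : α → ℝ} {K : NNReal}
    {t : Set α} {l : Filter α} {c : α} (hg : LipschitzOnWith K g t) (hl : l ≤ 𝓝 c)
    (ht : t ∈ l) : ∃ L, Tendsto g l (𝓝 L) := by
  obtain ⟨G, hG, hgG⟩ := hg.extend_real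
  exact ⟨G c, ((hG.continuous.tendsto c).mono_left hl).congr' (eventuallyEq_of_mem ht hgG).symm⟩

namespace Delta3

variable {a b : ℝ} {f : ℝ → ℝ}

lemma slope_slope_mono (hf : Delta3 a b f) {c : ℝ} (hc : c ∈ Icc a b) :
    ∀ x ∈ Icc a b \ {c}, ∀ y ∈ Icc a b \ {c}, ∀ z ∈ Icc a b \ {c}, x < y → y < z →
      slope (slope f c) x y ≤ slope (slope f c) y z := by
  rintro x ⟨hx, hxc⟩ y ⟨hy, hyc⟩ z ⟨hz, hzc⟩ hxy hyz
  have hxz := hxy.trans hyz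
  refine slope_le_slope_of_dd3_nonneg hxy hyz ?_
  rw [dd3_slope f (Ne.symm hxc) (Ne.symm hyc) (Ne.symm hzc) hxy.ne hxz.ne hyz.ne]
  exact hf.2 c x y z hc hx hy hz (Ne.symm hxc) (Ne.symm hyc) (Ne.symm hzc) hxy.ne hxz.ne hyz.ne

lemma differentiableAt (hf : Delta3 a b f) {c : ℝ} (hc : c ∈ Ioo a b) :
    DifferentiableAt ℝ f c := by
  obtain ⟨hac, hcb⟩ := hc
  obtain ⟨p, hap, hpc⟩ := exists_between hac
  obtain ⟨q, hcq, hqb⟩ := exists_between hcb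
  have mem {x : ℝ} (hax : a ≤ x) (hxb : x ≤ b) (hxc : x ≠ c) : x ∈ Icc a b \ {c} :=
    ⟨⟨hax, hxb⟩, hxc⟩
  have lip := lipschitzOnWith_of_slope_mono (hf.slope_slope_mono ⟨hac.le, hcb.le⟩)
    (mem le_rfl (by linarith) hac.ne) (mem hap.le (by linarith) hpc.ne)
    (mem (by linarith) hqb.le hcq.ne') (mem (by linarith) le_rfl hcb.ne') hap hqb
  have nbhd : (Icc a b \ {c}) ∩ Ioo p q ∈ 𝓝[≠] c := by
    refine mem_of_superset (inter_mem_nhdsWithin _ (Ioo_mem_nhds hpc hcq)) ?_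
    rintro x ⟨hxc, hpx, hxq⟩
    exact ⟨mem (by linarith) (by linarith) hxc, hpx, hxq⟩
  obtain ⟨L, hL⟩ := lip.exists_tendsto nhdsWithin_le_nhds nbhd
  exact (hasDerivAt_iff_tendsto_slope.2 hL).differentiableAt

lemma dd3_le_dd3_of_lt (hf : Delta3 a b f) {u v y z : ℝ} (hu : u ∈ Icc a b) (hv : v ∈ Icc a b)
    (hy : y ∈ Icc a b) (hz : z ∈ Icc a b) (huv : u < v) (huy : u ≠ y) (huz : u ≠ z)
    (hvy : v ≠ y) (hvz : v ≠ z) (hyz : y ≠ z) : dd3 f u y z ≤ dd3 f v y z := by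
  rw [← sub_nonpos, dd3_sub_dd3_eq_mul_dd4 f huv.ne huy huz hvy hvz hyz]
  exact mul_nonpos_of_nonpos_of_nonneg (sub_neg.2 huv).le
    (hf.2 u v y z hu hv hy hz huv.ne huy huz hvy hvz hyz)

lemma dd3_le_dd3_add (hf : Delta3 a b f) {x y z h : ℝ} (hax : a ≤ x) (hxy : x < y)
    (hyz : y < z) (hh : 0 < h) (hzb : z + h ≤ b) :
    dd3 f x y z ≤ dd3 f (x + h) (y + h) (z + h) := by
  calc dd3 f x y z = dd3 f z x y := dd3_rotate f x y z
    _ ≤ dd3 f (z + h) x y := by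
      apply hf.dd3_le_dd3_of_lt <;> first | linarith | exact ⟨by linarith, by linarith⟩
    _ = dd3 f y x (z + h) := (dd3_rotate f x y (z + h)).symm.trans (dd3_comm f x y (z + h))
    _ ≤ dd3 f (y + h) x (z + h) := by
      apply hf.dd3_le_dd3_of_lt <;> first | linarith | exact ⟨by linarith, by linarith⟩
    _ = dd3 f x (y + h) (z + h) := dd3_comm f _ _ _
    _ ≤ dd3 f (x + h) (y + h) (z + h) := by
      apply hf.dd3_le_dd3_of_lt <;> first | linarith | exact ⟨by linarith, by linarith⟩

lemma dd3_deriv_nonneg (hf : Delta3 a b f) {x y z : ℝ} (hx : x ∈ Ioo a b) (hz : z ∈ Ioo a b)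
    (hxy : x < y) (hyz : y < z) : 0 ≤ dd3 (deriv f) x y z := by
  have quotient {t : ℝ} (ht : t ∈ Ioo a b) :
      Tendsto (fun h => h⁻¹ * (f (t + h) - f t)) (𝓝[>] 0) (𝓝 (deriv f t)) :=
    (hasDerivAt_iff_tendsto_slope_zero.1 (hf.differentiableAt ht).hasDerivAt).mono_left
      (nhdsWithin_mono _ fun _ hh => ne_of_gt hh)
  have hy : y ∈ Ioo a b := ⟨hx.1.trans hxy, hyz.trans hz.2⟩
  -- `dd3 g x y z` is a fixed linear combination of `g x`, `g y`, `g z`.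
  have lim : Tendsto (fun h => dd3 (fun t => h⁻¹ * (f (t + h) - f t)) x y z) (𝓝[>] 0)
      (𝓝 (dd3 (deriv f) x y z)) :=
    (((quotient hx).div_const _).add ((quotient hy).div_const _)).add ((quotient hz).div_const _)
  refine ge_of_tendsto lim ?_
  filter_upwards [Ioo_mem_nhdsGT (sub_pos.2 hz.2)] with h ⟨hh, hzb⟩
  rw [dd3_difference_quotient]
  exact mul_nonneg (inv_nonneg.2 hh.le)
    (sub_nonneg.2 (hf.dd3_le_dd3_add hx.1.le hxy hyz hh (by linarith)))

lemma convexOn_deriv (hf : Delta3 a b f) : ConvexOn ℝ (Ioo a b) (deriv f) :=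
  convexOn_of_dd3_nonneg (convex_Ioo a b) fun _ hx _ hz _ hxy hyz =>
    hf.dd3_deriv_nonneg hx hz hxy hyz

end Delta3

theorem statement14_general (a b : ℝ) (f : ℝ → ℝ) (hf : Delta3 a b f) :
    (∀ x ∈ Set.Ioo a b, DifferentiableAt ℝ f x) ∧
    ConvexOn ℝ (Set.Ioo a b) (deriv f) :=
  ⟨fun _ hx => hf.differentiableAt hx, hf.convexOn_deriv⟩

/-- A 3-monotone function on `[a,b]` is differentiable on `(a,b)` and its
derivative is convex on `(a,b)`. -/
theorem statement14 (a b : ℝ) (hab : a < b) (f : ℝ → ℝ) (hf : Delta3 a b f) :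
    (∀ x ∈ Set.Ioo a b, DifferentiableAt ℝ f x) ∧
    ConvexOn ℝ (Set.Ioo a b) (deriv f) :=
  statement14_general a b f hf
end
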